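/- The modified union-find algorithm that processes the edges of a finite connected graph in the order given by a G-ordering, and for each edge e = uv sets the parent of root(u) to root(v) if root(v) ≺ root(u) (and symmetrically), produces a rooted tree satisfying the Basin Hierarchy Tree conditions. -/

import Mathlib

open scoped Classical

/-- A (multi)graph given by source and target maps on an edge type. -/
structure MGraph (V E : Type*) where
  src : E → V
  tgt : E → V

namespace MGraph

variable {V E : Type*} (G : MGraph V E)

/-- `e` is an edge joining `x` and `y`. -/
def Ends (e : E) (x y : V) : Prop :=
  (G.src e = x ∧ G.tgt e = y) ∨ (G.src e = y ∧ G.tgt e = x)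

/-- The graph is connected. -/
def Connected : Prop :=
  ∀ a b : V, Relation.ReflTransGen (fun x y => ∃ e, G.Ends e x y) a b

/-- Extension of a vertex signal to vertices and edges, `f(e) = max f(V(e))`. -/
def sig (f : V → ℝ) : V ⊕ E → ℝ
  | .inl v => f v
  | .inr e => max (f (G.src e)) (f (G.tgt e))

/-- `pos` realizes a `G`-ordering: a total ordering of `V ⊕ E` along which the
signal is nondecreasing and every vertex precedes each edge incident to it. -/
def IsGOrdering (f : V → ℝ) (pos : V ⊕ E → ℕ) : Prop :=
  Function.Injective pos ∧
  (∀ a b, pos a ≤ pos b → G.sig f a ≤ G.sig f b) ∧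
  (∀ e : E, pos (.inl (G.src e)) < pos (.inr e) ∧ pos (.inl (G.tgt e)) < pos (.inr e))

/-- Connectivity within the subgraph `G_{<k}` of elements with position `< k`. -/
def ConnB (pos : V ⊕ E → ℕ) (k : ℕ) (a b : V) : Prop :=
  pos (.inl a) < k ∧ pos (.inl b) < k ∧
    Relation.ReflTransGen (fun x y => ∃ e, pos (.inr e) < k ∧ G.Ends e x y) a b

/-- `m` is the `≺`-minimum of the connected component of `v` in `G_{<k}`. -/
def IsCompMin (pos : V ⊕ E → ℕ) (k : ℕ) (m v : V) : Prop :=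
  G.ConnB pos k m v ∧ ∀ w, G.ConnB pos k v w → pos (.inl m) ≤ pos (.inl w)

/-- The `≺`-maximal endpoint of an edge. -/
def maxEnd (pos : V ⊕ E → ℕ) (e : E) : V :=
  if pos (.inl (G.src e)) ≤ pos (.inl (G.tgt e)) then G.tgt e else G.src e

/-- `(p, L)` is a basin hierarchy tree of the signal `(G, f)` with respect to the
`G`-ordering `pos`, rooted at the `≺`-minimal vertex `r`, with linking-vertex map `L`. -/
structure IsBHT (f : V → ℝ) (pos : V ⊕ E → ℕ) (r : V) (p : V → V) (L : V → V) : Prop where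
  ordering : G.IsGOrdering f pos
  root_min : ∀ v, pos (.inl r) ≤ pos (.inl v)
  root_fix : p r = r
  reaches : ∀ v, ∃ n, p^[n] v = r
  spec : ∀ v, v ≠ r → ∃ e : E,
    G.IsCompMin pos (pos (.inr e)) v v ∧
    G.IsCompMin pos (pos (.inr e) + 1) (p v) v ∧
    L v = G.maxEnd pos e

end MGraph

/-- `u` is an ancestor of `v` in the tree with parent map `p` (`u ⪯_T v`). -/
def Anc {V : Type*} (p : V → V) (u v : V) : Prop := ∃ n, p^[n] v = u

/-- `f(𝔏(v))`, with value `+∞` at the root. -/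
noncomputable def fLink {V : Type*} (f : V → ℝ) (r : V) (L : V → V) (v : V) : EReal :=
  if v = r then ⊤ else (f (L v) : EReal)

/-- The persistence `pers(v) = f(𝔏(v)) - f(v)` of a vertex in a BHT. -/
noncomputable def persBHT {V : Type*} (f : V → ℝ) (r : V) (L : V → V) (v : V) : EReal :=
  fLink f r L v - (f v : EReal)

namespace MGraph

variable {V E : Type*} (G : MGraph V E)

/-- The component of `v` dies at the edge `e`: `v` is the minimum of its component
just before `e` is added, and no longer after. -/
def DiesAt (pos : V ⊕ E → ℕ) (v : V) (e : E) : Prop :=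
  G.IsCompMin pos (pos (.inr e)) v v ∧ ¬ G.IsCompMin pos (pos (.inr e) + 1) v v

/-- The death value of the component created by `v` (`+∞` if permanent). -/
noncomputable def deathVal (f : V → ℝ) (pos : V ⊕ E → ℕ) (v : V) : EReal :=
  if h : ∃ e, G.DiesAt pos v e then ((G.sig f (.inr h.choose) : ℝ) : EReal) else ⊤

/-- The degree-0 persistence diagram of `(G, f)`, as a multiset of intervals
`[birth, death)` (including trivial intervals). -/
noncomputable def PD0 [Fintype V] (f : V → ℝ) (pos : V ⊕ E → ℕ) : Multiset (EReal × EReal) :=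
  Finset.univ.val.map fun v : V => ((f v : EReal), G.deathVal f pos v)

end MGraph

/-- The nontrivial part of a multiset of intervals. -/
noncomputable def nontriv (M : Multiset (EReal × EReal)) : Multiset (EReal × EReal) :=
  M.filter fun ab => ab.1 < ab.2

/-- The 0-low-persistence filter associated to a BHT `(p, L)` rooted at `r`. -/
noncomputable def LPF {V : Type*} [Fintype V] (f : V → ℝ) (r : V) (p L : V → V)
    (ε : ℝ) (v : V) : ℝ :=
  (insert (f v) ((Finset.univ.filter fun u => Anc p u v ∧ persBHT f r L u < (ε : EReal)).image
    fun u => f (L u))).max' (Finset.insert_nonempty _ _)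

/-- The root of the union-find forest containing `v` (the parent map is iterated
enough times to reach a fixed point). -/
def ufRoot {V : Type*} [Fintype V] (p : V → V) (v : V) : V := p^[Fintype.card V] v

namespace MGraph

variable {V E : Type*} [Fintype V] (G : MGraph V E)

/-- One step of the modified union-find algorithm: for an edge `e = uv`, the
parent of `root(u)` is set to `root(v)` if `root(v) ≺ root(u)`, and symmetrically. -/
noncomputable def ufStep (pos : V ⊕ E → ℕ) (p : V → V) (e : E) : V → V :=
  let ru := ufRoot p (G.src e)
  let rv := ufRoot p (G.tgt e)
  if pos (.inl rv) < pos (.inl ru) then Function.update p ru rv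
  else if pos (.inl ru) < pos (.inl rv) then Function.update p rv ru
  else p

/-- Running the modified union-find algorithm on a list of edges, starting from
the trivial forest in which every vertex is its own parent. -/
noncomputable def ufRun (pos : V ⊕ E → ℕ) (l : List E) : V → V :=
  l.foldl (G.ufStep pos) id

end MGraph

/-!
After processing a set `S` of edges, the union-find forest satisfies an invariant: parents
precede their children in `≺`, every vertex lies in the `S`-component of its parent, and every
root is the `≺`-minimum of its `S`-component. Adding an edge `xy` hangs the larger of the two
roots of `x` and `y` below the smaller one, which preserves the invariant. Since the edges come
in increasing order, the forest just before an edge `e` is one for `G_{≺e}`, and the forest just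
after is one for `G_{⪯e}`. A vertex `v ≠ r` is not a root at the end (roots are component minima
and `G` is connected), and it receives its final parent at the unique edge `e` where it stops
being a root: then `v` is the minimum of its component in `G_{≺e}`, and its new parent is the
minimum of its component in `G_{⪯e}`.
-/

namespace Function

variable {α β : Type*} [Preorder β] {p : α → α} {ρ : α → β}

theorem antitone_iterate_of_le (hp : ∀ a, ρ (p a) ≤ ρ a) (a : α) :
    Antitone fun n => ρ (p^[n] a) :=
  antitone_nat_of_succ_le fun n => by
    simpa only [iterate_succ_apply'] using hp (p^[n] a)

theorem isFixedPt_iterate_card [Fintype α] (hp : ∀ a, p a = a ∨ ρ (p a) < ρ a) (a : α) :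
    IsFixedPt p (p^[Fintype.card α] a) := by
  have hle : ∀ a, ρ (p a) ≤ ρ a := fun a => (hp a).elim (fun h => (congrArg ρ h).le) le_of_lt
  have fixed_of_eq : ∀ i j, i < j → p^[i] a = p^[j] a → IsFixedPt p (p^[i] a) := by
    intro i j hij heq
    refine (hp _).resolve_right fun hlt => ?_
    have := antitone_iterate_of_le hle a (Nat.succ_le_of_lt hij)
    simp only [iterate_succ_apply', ← heq] at this
    exact this.not_gt hlt
  obtain ⟨i, j, hne, heq⟩ := Fintype.exists_ne_map_eq_of_card_lt
    (fun i : Fin (Fintype.card α + 1) => p^[i] a) (by simp)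
  obtain ⟨k, hk, hfix⟩ : ∃ k ≤ Fintype.card α, IsFixedPt p (p^[k] a) := by
    rcases Fin.lt_or_lt_of_ne hne with h | h
    · exact ⟨i, Nat.lt_succ_iff.mp i.2, fixed_of_eq i j h heq⟩
    · exact ⟨j, Nat.lt_succ_iff.mp j.2, fixed_of_eq j i h heq.symm⟩
  rw [← Nat.sub_add_cancel hk, iterate_add_apply, iterate_fixed hfix]
  exact hfix

end Function

namespace List

variable {α β : Type*}

theorem exists_append_cons_of_foldl_not {f : β → α → β} {P : β → Prop} :
    ∀ (l : List α) (b : β), P b → ¬ P (l.foldl f b) →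
      ∃ l₁ a l₂, l = l₁ ++ a :: l₂ ∧ P (l₁.foldl f b) ∧ ¬ P (f (l₁.foldl f b) a)
  | [], _, hb, h => absurd hb h
  | a :: t, b, hb, h => by
    by_cases ha : P (f b a)
    · obtain ⟨l₁, a', l₂, rfl, h₁, h₂⟩ := exists_append_cons_of_foldl_not t (f b a) ha h
      exact ⟨a :: l₁, a', l₂, rfl, h₁, h₂⟩
    · exact ⟨[], a, t, rfl, hb, ha⟩

theorem mem_left_iff_lt_of_pairwise [Preorder β] {g : α → β} {l₁ l₂ : List α} {a x : α}
    (hl : (l₁ ++ a :: l₂).Pairwise fun x y => g x < g y) (hx : x ∈ l₁ ++ a :: l₂) :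
    x ∈ l₁ ↔ g x < g a := by
  rw [pairwise_append, pairwise_cons] at hl
  refine ⟨fun h => hl.2.2 x h a mem_cons_self, fun hlt => ?_⟩
  rcases mem_append.mp hx with h | h | ⟨_, h⟩
  · exact h
  · exact absurd hlt (lt_irrefl _)
  · exact absurd hlt (hl.2.1.1 x h).not_gt

end List

namespace MGraph

variable {V E : Type*} {G : MGraph V E} {pos : V ⊕ E → ℕ} {e : E} {x y : V}

theorem Ends.symm (h : G.Ends e x y) : G.Ends e y x := Or.symm h

theorem Ends.eq_or_eq {a b : V} (h : G.Ends e x y) (h' : G.Ends e a b) :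
    a = x ∧ b = y ∨ a = y ∧ b = x := by
  unfold Ends at h h'
  grind

theorem IsGOrdering.pos_lt_of_ends {f : V → ℝ} (hpos : G.IsGOrdering f pos) (h : G.Ends e x y) :
    pos (.inl x) < pos (.inr e) := by
  rcases h with ⟨rfl, -⟩ | ⟨-, rfl⟩
  exacts [(hpos.2.2 e).1, (hpos.2.2 e).2]

variable (G) in
def ConnVia (S : Set E) : V → V → Prop :=
  Relation.ReflTransGen fun x y => ∃ e ∈ S, G.Ends e x y

namespace ConnVia

variable {S T : Set E} {a b c : V}

@[refl] theorem refl (a : V) : G.ConnVia S a a := Relation.ReflTransGen.refl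

theorem trans (h₁ : G.ConnVia S a b) (h₂ : G.ConnVia S b c) : G.ConnVia S a c :=
  Relation.ReflTransGen.trans h₁ h₂

theorem tail (h : G.ConnVia S a x) (he : e ∈ S) (hxy : G.Ends e x y) : G.ConnVia S a y :=
  Relation.ReflTransGen.tail h ⟨e, he, hxy⟩

theorem symm (h : G.ConnVia S a b) : G.ConnVia S b a :=
  Relation.ReflTransGen.mono (fun _ _ ⟨e, he, h⟩ => ⟨e, he, h.symm⟩) _ _
    (Relation.ReflTransGen.swap _ _ h)

theorem mono (hST : S ⊆ T) (h : G.ConnVia S a b) : G.ConnVia T a b :=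
  Relation.ReflTransGen.mono (fun _ _ ⟨e, he, h⟩ => ⟨e, hST he, h⟩) _ _ h

theorem of_insert (hxy : G.Ends e x y) (h : G.ConnVia (insert e S) a b) :
    G.ConnVia S a b ∨
      (G.ConnVia S a x ∨ G.ConnVia S a y) ∧ (G.ConnVia S x b ∨ G.ConnVia S y b) := by
  induction h with
  | refl => exact .inl (refl _)
  | @tail c d _ hcd ih =>
    obtain ⟨e', he', hends⟩ := hcd
    rcases Set.mem_insert_iff.mp he' with rfl | he'
    · rcases hends.eq_or_eq hxy with ⟨rfl, rfl⟩ | ⟨rfl, rfl⟩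
      · exact .inr ⟨ih.elim .inl And.left, .inr (refl _)⟩
      · exact .inr ⟨ih.elim .inr And.left, .inl (refl _)⟩
    · rcases ih with hac | ⟨hac, hc⟩
      · exact .inl (hac.tail he' hends)
      · exact .inr ⟨hac, hc.imp (·.tail he' hends) (·.tail he' hends)⟩

end ConnVia

theorem Connected.connVia {S : Set E} (hG : G.Connected) (hS : ∀ e, e ∈ S) (a b : V) :
    G.ConnVia S a b :=
  Relation.ReflTransGen.mono (fun _ _ ⟨e, h⟩ => ⟨e, hS e, h⟩) _ _ (hG a b)

variable (G pos) in
structure IsUFForest (S : Set E) (p : V → V) : Prop where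
  parent_lt : ∀ v, p v = v ∨ pos (.inl (p v)) < pos (.inl v)
  connVia_parent : ∀ v, G.ConnVia S v (p v)
  root_le : ∀ v w, p v = v → G.ConnVia S v w → pos (.inl v) ≤ pos (.inl w)

variable {S : Set E} {p : V → V}

theorem isUFForest_id : G.IsUFForest pos ∅ id where
  parent_lt _ := .inl rfl
  connVia_parent _ := ConnVia.refl _
  root_le v w _ h := by
    induction h with
    | refl => exact le_rfl
    | tail _ hstep => exact absurd hstep.choose_spec.1 (Set.notMem_empty _)

theorem IsUFForest.isCompMin {k : ℕ} (hI : G.IsUFForest pos {e | pos (.inr e) < k} p)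
    {m v : V} (hm : p m = m) (hmk : pos (.inl m) < k) (hvk : pos (.inl v) < k)
    (h : G.ConnVia {e | pos (.inr e) < k} m v) : G.IsCompMin pos k m v :=
  ⟨⟨hmk, hvk, h⟩, fun w hw => hI.root_le m w hm (h.trans hw.2.2)⟩

variable [Fintype V]

section

variable (hinj : Function.Injective pos) (hI : G.IsUFForest pos S p)
include hI

theorem IsUFForest.ufRoot_isFixedPt (v : V) : p (ufRoot p v) = ufRoot p v :=
  Function.isFixedPt_iterate_card (ρ := fun v => pos (.inl v)) hI.parent_lt v

theorem IsUFForest.ufRoot_le (v : V) : pos (.inl (ufRoot p v)) ≤ pos (.inl v) :=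
  Function.antitone_iterate_of_le (ρ := fun v => pos (.inl v))
    (fun v => (hI.parent_lt v).elim (fun h => (congrArg (fun v => pos (.inl v)) h).le) le_of_lt)
    v (Nat.zero_le _)

theorem IsUFForest.connVia_ufRoot (v : V) : G.ConnVia S v (ufRoot p v) := by
  suffices ∀ n, G.ConnVia S v (p^[n] v) from this _
  intro n
  induction n with
  | zero => exact ConnVia.refl v
  | succ n ih => exact Function.iterate_succ_apply' p n v ▸ ih.trans (hI.connVia_parent _)

theorem IsUFForest.ufRoot_le_of_connVia {v w : V} (h : G.ConnVia S v w) :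
    pos (.inl (ufRoot p v)) ≤ pos (.inl w) :=
  hI.root_le _ w (hI.ufRoot_isFixedPt v) ((hI.connVia_ufRoot v).symm.trans h)

include hinj

theorem IsUFForest.eq_ufRoot_of_connVia {w v : V} (hw : p w = w) (h : G.ConnVia S w v) :
    w = ufRoot p v :=
  Sum.inl_injective <| hinj <| le_antisymm
    (hI.root_le w _ hw (h.trans (hI.connVia_ufRoot v)))
    (hI.ufRoot_le_of_connVia h.symm)

theorem IsUFForest.root_le_insert (hxy : G.Ends e x y) {p' : V → V}
    (hfix : ∀ w, p' w = w → p w = w)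
    (hmin : ∀ w, p' w = w → w = ufRoot p x ∨ w = ufRoot p y →
      pos (.inl w) ≤ pos (.inl (ufRoot p x)) ∧ pos (.inl w) ≤ pos (.inl (ufRoot p y)))
    (w w' : V) (hw : p' w = w) (h : G.ConnVia (insert e S) w w') :
    pos (.inl w) ≤ pos (.inl w') := by
  have hwp := hfix w hw
  rcases h.of_insert hxy with h | ⟨hx, hw'⟩
  · exact hI.root_le w w' hwp h
  · have hle := hmin w hw (hx.imp (hI.eq_ufRoot_of_connVia hinj hwp)
      (hI.eq_ufRoot_of_connVia hinj hwp))
    rcases hw' with hw' | hw'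
    · exact hle.1.trans (hI.ufRoot_le_of_connVia hw')
    · exact hle.2.trans (hI.ufRoot_le_of_connVia hw')

theorem IsUFForest.update (hxy : G.Ends e x y)
    (hlt : pos (.inl (ufRoot p y)) < pos (.inl (ufRoot p x))) :
    G.IsUFForest pos (insert e S) (Function.update p (ufRoot p x) (ufRoot p y)) := by
  have hne : ufRoot p y ≠ ufRoot p x := fun h => hlt.ne (congrArg (fun v => pos (.inl v)) h)
  have hfix : ∀ w, Function.update p (ufRoot p x) (ufRoot p y) w = w → w ≠ ufRoot p x := by
    rintro w hw rfl
    exact hne (by rwa [Function.update_self] at hw)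
  refine ⟨fun w => ?_, fun w => ?_, hI.root_le_insert hinj hxy (fun w hw => ?_) fun w hw hxy => ?_⟩
  · by_cases hw : w = ufRoot p x
    · subst hw
      exact .inr (by rwa [Function.update_self])
    · simpa only [Function.update_of_ne hw] using hI.parent_lt w
  · by_cases hw : w = ufRoot p x
    · subst hw
      rw [Function.update_self]
      exact (((hI.connVia_ufRoot x).symm.mono (Set.subset_insert e S)).tail
        (Set.mem_insert e S) hxy).trans ((hI.connVia_ufRoot y).mono (Set.subset_insert e S))
    · rw [Function.update_of_ne hw]
      exact (hI.connVia_parent w).mono (Set.subset_insert e S)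
  · rwa [Function.update_of_ne (hfix w hw)] at hw
  · obtain rfl := hxy.resolve_left (hfix w hw)
    exact ⟨hlt.le, le_rfl⟩

theorem IsUFForest.insert_of_ufRoot_eq (h : ufRoot p (G.src e) = ufRoot p (G.tgt e)) :
    G.IsUFForest pos (insert e S) p := by
  refine ⟨hI.parent_lt, fun w => (hI.connVia_parent w).mono (Set.subset_insert e S),
    hI.root_le_insert hinj (.inl ⟨rfl, rfl⟩) (fun _ => id) fun w _ hw => ?_⟩
  rw [← h, or_self] at hw
  subst hw
  exact ⟨le_rfl, h ▸ le_rfl⟩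

end

theorem ufStep_cases (hinj : Function.Injective pos) (p : V → V) (e : E) :
    ufRoot p (G.src e) = ufRoot p (G.tgt e) ∧ G.ufStep pos p e = p ∨
      ∃ x y, G.Ends e x y ∧ pos (.inl (ufRoot p y)) < pos (.inl (ufRoot p x)) ∧
        G.ufStep pos p e = Function.update p (ufRoot p x) (ufRoot p y) := by
  dsimp only [ufStep]
  split_ifs with h₁ h₂
  · exact .inr ⟨_, _, .inl ⟨rfl, rfl⟩, h₁, rfl⟩
  · exact .inr ⟨_, _, .inr ⟨rfl, rfl⟩, h₂, rfl⟩
  · exact .inl ⟨Sum.inl_injective (hinj (by omega)), rfl⟩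

section

variable (hinj : Function.Injective pos) (hI : G.IsUFForest pos S p)
include hinj hI

theorem IsUFForest.ufStep (e : E) : G.IsUFForest pos (insert e S) (G.ufStep pos p e) := by
  rcases ufStep_cases hinj p e with ⟨h, hstep⟩ | ⟨x, y, hxy, hlt, hstep⟩
  · rw [hstep]; exact hI.insert_of_ufRoot_eq hinj h
  · rw [hstep]; exact hI.update hinj hxy hlt

theorem IsUFForest.ufStep_apply_of_ne {v : V} (hv : p v ≠ v) (e : E) :
    G.ufStep pos p e v = p v := by
  rcases ufStep_cases hinj p e with ⟨-, hstep⟩ | ⟨x, _, -, -, hstep⟩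
  · rw [hstep]
  · rw [hstep, Function.update_of_ne]
    rintro rfl
    exact hv (hI.ufRoot_isFixedPt x)

theorem IsUFForest.exists_of_ufStep_apply_ne {v : V} (hv : p v = v)
    (h : G.ufStep pos p e v ≠ v) :
    ∃ x y, G.Ends e x y ∧ v = ufRoot p x ∧
      G.ufStep pos p e (G.ufStep pos p e v) = G.ufStep pos p e v := by
  rcases ufStep_cases hinj p e with ⟨-, hstep⟩ | ⟨x, y, hxy, hlt, hstep⟩
  · rw [hstep] at h; exact absurd hv h
  · have hvx : v = ufRoot p x := by
      by_contra hne
      rw [hstep, Function.update_of_ne hne] at h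
      exact h hv
    have hne : ufRoot p y ≠ ufRoot p x := fun h => hlt.ne (congrArg (fun v => pos (.inl v)) h)
    refine ⟨x, y, hxy, hvx, ?_⟩
    rw [hstep, hvx, Function.update_self, Function.update_of_ne hne]
    exact hI.ufRoot_isFixedPt y

theorem IsUFForest.foldl_ufStep (l : List E) :
    G.IsUFForest pos (S ∪ {e | e ∈ l}) (l.foldl (G.ufStep pos) p) := by
  induction l generalizing S p with
  | nil => simpa using hI
  | cons e t ih =>
    rw [List.foldl_cons]
    convert ih (hI.ufStep hinj e) using 1
    ext
    simp only [List.mem_cons, Set.mem_union, Set.mem_ofPred_eq, Set.mem_insert_iff]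
    tauto

theorem IsUFForest.foldl_ufStep_apply_of_ne {v : V} (hv : p v ≠ v) (l : List E) :
    l.foldl (G.ufStep pos) p v = p v := by
  induction l generalizing S p with
  | nil => rfl
  | cons e t ih =>
    have hstep := hI.ufStep_apply_of_ne hinj hv e
    rw [List.foldl_cons, ih (hI.ufStep hinj e) (hstep ▸ hv), hstep]

end

theorem isUFForest_ufRun (hinj : Function.Injective pos) (l : List E) :
    G.IsUFForest pos {e | e ∈ l} (G.ufRun pos l) := by
  simpa [ufRun] using isUFForest_id.foldl_ufStep hinj l

theorem exists_isCompMin_of_ufRun_ne {f : V → ℝ} (hpos : G.IsGOrdering f pos) {l : List E}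
    (hall : ∀ e, e ∈ l) (hsorted : l.Pairwise fun a b => pos (.inr a) < pos (.inr b))
    {v : V} (hv : G.ufRun pos l v ≠ v) :
    ∃ e, G.IsCompMin pos (pos (.inr e)) v v ∧
      G.IsCompMin pos (pos (.inr e) + 1) (G.ufRun pos l v) v := by
  obtain ⟨l₁, e, l₂, rfl, hv₁, hv₂⟩ :=
    l.exists_append_cons_of_foldl_not (P := fun q => q v = v) id rfl hv
  change G.ufRun pos l₁ v = v at hv₁
  change G.ufStep pos (G.ufRun pos l₁) e v ≠ v at hv₂
  have hS₁ : {e' | e' ∈ l₁} = {e' | pos (.inr e') < pos (.inr e)} :=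
    Set.ext fun e' => List.mem_left_iff_lt_of_pairwise hsorted (hall e')
  have hS₂ : insert e {e' | pos (.inr e') < pos (.inr e)} =
      {e' | pos (.inr e') < pos (.inr e) + 1} :=
    Set.ext fun e' => by
      simp only [Set.mem_insert_iff, Set.mem_ofPred_eq, Nat.lt_succ_iff, le_iff_lt_or_eq,
        hpos.1.eq_iff, Sum.inr.injEq, or_comm]
  have hI₁ := hS₁ ▸ isUFForest_ufRun (G := G) hpos.1 l₁
  have hI₂ := hS₂ ▸ hI₁.ufStep hpos.1 e
  obtain ⟨x, _, hxy, hvx, hfix⟩ := hI₁.exists_of_ufStep_apply_ne hpos.1 hv₁ hv₂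
  have hrun : G.ufRun pos (l₁ ++ e :: l₂) v = G.ufStep pos (G.ufRun pos l₁) e v := by
    rw [ufRun, List.foldl_append, List.foldl_cons]
    exact hI₂.foldl_ufStep_apply_of_ne hpos.1 hv₂ l₂
  have hvK : pos (.inl v) < pos (.inr e) :=
    hvx ▸ (hI₁.ufRoot_le x).trans_lt (hpos.pos_lt_of_ends hxy)
  have hlt := (hI₂.parent_lt v).resolve_left hv₂
  refine ⟨e, hI₁.isCompMin hv₁ hvK hvK (ConnVia.refl v), ?_⟩
  rw [hrun]
  exact hI₂.isCompMin hfix (by omega) (by omega) (hI₂.connVia_parent v).symm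

end MGraph

theorem ufRun_isBHT_general {V E : Type*} [Fintype V]
    (G : MGraph V E) (hG : G.Connected) (f : V → ℝ) (pos : V ⊕ E → ℕ)
    (hpos : G.IsGOrdering f pos) (r : V) (hr : ∀ v, pos (.inl r) ≤ pos (.inl v))
    (l : List E) (hall : ∀ e : E, e ∈ l)
    (hsorted : l.Pairwise fun a b => pos (.inr a) < pos (.inr b)) :
    (G.ufRun pos l) r = r ∧ (∀ v, ∃ n : ℕ, (G.ufRun pos l)^[n] v = r) ∧
    ∀ v, v ≠ r → ∃ e : E,
      G.IsCompMin pos (pos (.inr e)) v v ∧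
      G.IsCompMin pos (pos (.inr e) + 1) ((G.ufRun pos l) v) v := by
  have hI := MGraph.isUFForest_ufRun (G := G) hpos.1 l
  have eq_of_isRoot : ∀ v, G.ufRun pos l v = v → v = r := fun v hv =>
    Sum.inl_injective <| hpos.1 <| le_antisymm (hI.root_le v r hv (hG.connVia hall v r)) (hr v)
  refine ⟨(hI.parent_lt r).resolve_right (hr _).not_gt,
    fun v => ⟨Fintype.card V, eq_of_isRoot _ (hI.ufRoot_isFixedPt v)⟩,
    fun v hv => G.exists_isCompMin_of_ufRun_ne hpos hall hsorted fun h => hv (eq_of_isRoot v h)⟩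

/-- The modified union-find algorithm, processing all edges in the order given by
a `G`-ordering, produces a rooted tree satisfying the Basin Hierarchy Tree
conditions. -/
theorem ufRun_isBHT {V E : Type*} [Fintype V] [Fintype E]
    (G : MGraph V E) (hG : G.Connected) (f : V → ℝ) (pos : V ⊕ E → ℕ)
    (hpos : G.IsGOrdering f pos) (r : V) (hr : ∀ v, pos (.inl r) ≤ pos (.inl v))
    (l : List E) (hnd : l.Nodup) (hall : ∀ e : E, e ∈ l)
    (hsorted : l.Pairwise fun a b => pos (.inr a) < pos (.inr b)) :
    (G.ufRun pos l) r = r ∧ (∀ v, ∃ n : ℕ, (G.ufRun pos l)^[n] v = r) ∧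
    ∀ v, v ≠ r → ∃ e : E,
      G.IsCompMin pos (pos (.inr e)) v v ∧
      G.IsCompMin pos (pos (.inr e) + 1) ((G.ufRun pos l) v) v :=
  ufRun_isBHT_general G hG f pos hpos r hr l hall hsorted
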